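/- Let m ≥ 1, n = m+1, h > 0, z_F > 0, M_α > 0, and let D ∈ ℝⁿ have entries D_1,…,D_n. Let S(D) and A(D) be the matrices defined below, and set G = (1/z_F)·S(D) − M_α·A(D). Then for every v ∈ ℝ^m, with the convention v₀ := 0: vᵀGv = Term₁ − Term₂, where Term₁ = (1/(2h·z_F))·(Σ_{i=2}^{m}(D_i + D_{i+1})(v_i − v_{i−1})² + (D_1 + D_2)v_1²) and Term₂ = (M_α/4)·(Σ_{i=1}^{m−1}(D_i − D_{i+2})v_i² + (D_m + D_{m+1})v_m²). -/

import Mathlib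

/-!
The quadratic form of a tridiagonal matrix `M` only sees its diagonal and the pair sums
`M i (i+1) + M (i+1) i`. For `A(D)` the pair sums vanish. For `S(D)`, with `c k = D k + D (k+1)`,
the diagonal entries are `(c k + c (k+1)) / 2h` (just `c m / 2h` at `k = m`) and the pair sums
`-2 c (k+1) / 2h`, and summation by parts (using `v 0 = 0`) reassembles these into
`(1 / 2h) ∑ k, c k (v k - v (k-1))²`.
-/

open Matrix Finset

/-- 1-based access to the entries of a finite vector, with value `0` at index `0`
and out of range. -/
def pad1 {n : ℕ} (v : Fin n → ℝ) : ℕ → ℝ :=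
  fun k => if hk : k - 1 < n then (if k = 0 then 0 else v ⟨k - 1, hk⟩) else 0

/-- The symmetric tridiagonal stiffness matrix `S(D)` (1-based mathematical indexing). -/
noncomputable def matS (m : ℕ) (h : ℝ) (d : ℕ → ℝ) : Matrix (Fin m) (Fin m) ℝ :=
  Matrix.of fun i j =>
    if i = j then
      (if i.val + 1 = m then (d m + d (m + 1)) / (2 * h)
       else (d (i.val + 1) + 2 * d (i.val + 2) + d (i.val + 3)) / (2 * h))
    else if i.val + 1 = j.val then -((d (i.val + 2) + d (i.val + 3)) / (2 * h))
    else if j.val + 1 = i.val then -((d (j.val + 2) + d (j.val + 3)) / (2 * h))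
    else 0

/-- The tridiagonal matrix `A(D)` (1-based mathematical indexing). -/
noncomputable def matA (m : ℕ) (d : ℕ → ℝ) : Matrix (Fin m) (Fin m) ℝ :=
  Matrix.of fun i j =>
    if i = j then
      (if i.val + 1 = m then (d m + d (m + 1)) / 4
       else (d (i.val + 1) - d (i.val + 3)) / 4)
    else if i.val + 1 = j.val then (d (i.val + 2) + d (i.val + 3)) / 4
    else if j.val + 1 = i.val then -((d (j.val + 2) + d (j.val + 3)) / 4)
    else 0

lemma pad1_zero {n : ℕ} (v : Fin n → ℝ) : pad1 v 0 = 0 := by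
  simp [pad1]

lemma pad1_succ {n : ℕ} (v : Fin n → ℝ) (i : ℕ) (hi : i < n) :
    pad1 v (i + 1) = v ⟨i, hi⟩ := by
  simp [pad1, hi]

def natEntry {n : ℕ} (M : Matrix (Fin n) (Fin n) ℝ) (i j : ℕ) : ℝ :=
  if h : i < n ∧ j < n then M ⟨i, h.1⟩ ⟨j, h.2⟩ else 0

lemma natEntry_of_lt {n : ℕ} (M : Matrix (Fin n) (Fin n) ℝ) {i j : ℕ} (hi : i < n)
    (hj : j < n) :
    natEntry M i j = M ⟨i, hi⟩ ⟨j, hj⟩ :=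
  dif_pos ⟨hi, hj⟩

lemma sum_range_sum_range_of_banded {R : Type*} [AddCommMonoid R] (F : ℕ → ℕ → R)
    (hF : ∀ i j, i + 2 ≤ j ∨ j + 2 ≤ i → F i j = 0) (N : ℕ) :
    ∑ i ∈ range (N + 1), ∑ j ∈ range (N + 1), F i j =
      ∑ i ∈ range (N + 1), F i i + ∑ i ∈ range N, (F i (i + 1) + F (i + 1) i) := by
  induction N with
  | zero => simp
  | succ N ih =>
    have last_col : ∑ i ∈ range (N + 1), F i (N + 1) = F N (N + 1) := by
      rw [sum_range_succ, sum_eq_zero fun i hi => hF _ _ (.inl (by grind)), zero_add]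
    have last_row : ∑ j ∈ range (N + 1), F (N + 1) j = F (N + 1) N := by
      rw [sum_range_succ, sum_eq_zero fun j hj => hF _ _ (.inr (by grind)), zero_add]
    rw [sum_range_succ, sum_range_succ (F (N + 1)), last_row,
      sum_congr rfl fun i _ => sum_range_succ (F i) (N + 1), sum_add_distrib, ih, last_col]
    rw [sum_range_succ (fun i => F i i) (N + 1),
      sum_range_succ (fun i => F i (i + 1) + F (i + 1) i) N]
    abel

lemma dotProduct_mulVec_eq_sum_range {n : ℕ} (M : Matrix (Fin n) (Fin n) ℝ)
    (v : Fin n → ℝ) :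
    v ⬝ᵥ M *ᵥ v =
      ∑ i ∈ range n, ∑ j ∈ range n, pad1 v (i + 1) * natEntry M i j * pad1 v (j + 1) := by
  rw [← Fin.sum_univ_eq_sum_range]
  refine sum_congr rfl fun i _ => ?_
  rw [← Fin.sum_univ_eq_sum_range, mulVec, dotProduct, mul_sum]
  refine sum_congr rfl fun j _ => ?_
  simp [natEntry, pad1_succ, mul_assoc]

lemma dotProduct_mulVec_of_tridiagonal {N : ℕ} (M : Matrix (Fin (N + 1)) (Fin (N + 1)) ℝ)
    (hM : ∀ i j, i + 2 ≤ j ∨ j + 2 ≤ i → natEntry M i j = 0) (v : Fin (N + 1) → ℝ) :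
    v ⬝ᵥ M *ᵥ v =
      ∑ i ∈ range (N + 1), natEntry M i i * pad1 v (i + 1) ^ 2 +
        ∑ i ∈ range N, (natEntry M i (i + 1) + natEntry M (i + 1) i) *
          pad1 v (i + 1) * pad1 v (i + 2) := by
  rw [dotProduct_mulVec_eq_sum_range,
    sum_range_sum_range_of_banded _ fun i j hij => by rw [hM i j hij, mul_zero, zero_mul]]
  congr 1 <;> refine sum_congr rfl fun i _ => by ring

lemma sum_range_mul_sub_sq {R : Type*} [CommRing R] (c u : ℕ → R) (hu : u 0 = 0) (N : ℕ) :
    ∑ k ∈ range (N + 1), c k * (u (k + 1) - u k) ^ 2 =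
      ∑ k ∈ range N, (c k + c (k + 1)) * u (k + 1) ^ 2 + c N * u (N + 1) ^ 2 -
        2 * ∑ k ∈ range N, c (k + 1) * u (k + 1) * u (k + 2) := by
  induction N with
  | zero => simp [hu]
  | succ N ih =>
    rw [sum_range_succ, ih, sum_range_succ, sum_range_succ]
    ring

lemma sum_Icc_eq_sum_range {M : Type*} [AddCommMonoid M] (f : ℕ → M) (a N : ℕ) :
    ∑ i ∈ Icc (a + 1) (N + a), f i = ∑ k ∈ range N, f (k + a + 1) := by
  rw [← Ico_add_one_right_eq_Icc, sum_Ico_eq_sum_range, show N + a + 1 - (a + 1) = N by omega]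
  exact sum_congr rfl fun k _ => by rw [add_comm, add_assoc]

lemma natEntry_matS_eq_zero (m : ℕ) (h : ℝ) (d : ℕ → ℝ) (i j : ℕ)
    (hij : i + 2 ≤ j ∨ j + 2 ≤ i) : natEntry (matS m h d) i j = 0 := by
  simp only [natEntry, matS, of_apply, Fin.ext_iff]
  split_ifs <;> first | omega | rfl

lemma natEntry_matA_eq_zero (m : ℕ) (d : ℕ → ℝ) (i j : ℕ)
    (hij : i + 2 ≤ j ∨ j + 2 ≤ i) : natEntry (matA m d) i j = 0 := by
  simp only [natEntry, matA, of_apply, Fin.ext_iff]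
  split_ifs <;> first | omega | rfl

lemma dotProduct_matS_mulVec (N : ℕ) (h : ℝ) (d : ℕ → ℝ) (v : Fin (N + 1) → ℝ) :
    v ⬝ᵥ matS (N + 1) h d *ᵥ v =
      1 / (2 * h) *
        ∑ k ∈ range (N + 1), (d (k + 1) + d (k + 2)) * (pad1 v (k + 1) - pad1 v k) ^ 2 := by
  have diag : ∀ i ∈ range N, natEntry (matS (N + 1) h d) i i * pad1 v (i + 1) ^ 2 =
      1 / (2 * h) * ((d (i + 1) + d (i + 2) + (d (i + 2) + d (i + 3))) * pad1 v (i + 1) ^ 2) := by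
    intro i hi
    rw [mem_range] at hi
    rw [natEntry_of_lt _ (by omega) (by omega)]
    simp only [matS, of_apply, Fin.ext_iff]
    split_ifs <;> first | omega | ring
  have off : ∀ i ∈ range N, (natEntry (matS (N + 1) h d) i (i + 1) +
      natEntry (matS (N + 1) h d) (i + 1) i) * pad1 v (i + 1) * pad1 v (i + 2) =
      -(1 / (2 * h)) * 2 * ((d (i + 2) + d (i + 3)) * pad1 v (i + 1) * pad1 v (i + 2)) := by
    intro i hi
    rw [mem_range] at hi
    rw [natEntry_of_lt _ (by omega) (by omega), natEntry_of_lt _ (by omega) (by omega)]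
    simp only [matS, of_apply, Fin.ext_iff]
    split_ifs <;> first | omega | ring
  have last : natEntry (matS (N + 1) h d) N N = 1 / (2 * h) * (d (N + 1) + d (N + 2)) := by
    rw [natEntry_of_lt _ (by omega) (by omega)]
    simp only [matS, of_apply, Fin.ext_iff]
    split_ifs <;> first | omega | ring
  rw [dotProduct_mulVec_of_tridiagonal _ (natEntry_matS_eq_zero _ _ _), sum_range_succ,
    sum_congr rfl diag, sum_congr rfl off, last, ← mul_sum, ← mul_sum,
    sum_range_mul_sub_sq _ _ (pad1_zero v)]
  ring

lemma dotProduct_matA_mulVec (N : ℕ) (d : ℕ → ℝ) (v : Fin (N + 1) → ℝ) :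
    v ⬝ᵥ matA (N + 1) d *ᵥ v =
      1 / 4 * (∑ i ∈ range N, (d (i + 1) - d (i + 3)) * pad1 v (i + 1) ^ 2 +
        (d (N + 1) + d (N + 2)) * pad1 v (N + 1) ^ 2) := by
  have diag : ∀ i ∈ range N, natEntry (matA (N + 1) d) i i * pad1 v (i + 1) ^ 2 =
      1 / 4 * ((d (i + 1) - d (i + 3)) * pad1 v (i + 1) ^ 2) := by
    intro i hi
    rw [mem_range] at hi
    rw [natEntry_of_lt _ (by omega) (by omega)]
    simp only [matA, of_apply, Fin.ext_iff]
    split_ifs <;> first | omega | ring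
  have skew : ∀ i ∈ range N, (natEntry (matA (N + 1) d) i (i + 1) +
      natEntry (matA (N + 1) d) (i + 1) i) * pad1 v (i + 1) * pad1 v (i + 2) = 0 := by
    intro i hi
    rw [mem_range] at hi
    rw [natEntry_of_lt _ (by omega) (by omega), natEntry_of_lt _ (by omega) (by omega)]
    simp only [matA, of_apply, Fin.ext_iff]
    split_ifs <;> first | omega | ring
  have last : natEntry (matA (N + 1) d) N N = 1 / 4 * (d (N + 1) + d (N + 2)) := by
    rw [natEntry_of_lt _ (by omega) (by omega)]
    simp only [matA, of_apply, Fin.ext_iff]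
    split_ifs <;> first | omega | ring
  rw [dotProduct_mulVec_of_tridiagonal _ (natEntry_matA_eq_zero _ _), sum_range_succ,
    sum_congr rfl diag, sum_eq_zero skew, last, ← mul_sum]
  ring

theorem stmt_12_general (m : ℕ) (h zF Ma : ℝ) (D : Fin (m + 1) → ℝ) :
    ∀ v : Fin m → ℝ,
      v ⬝ᵥ ((1 / zF) • matS m h (pad1 D) - Ma • matA m (pad1 D)).mulVec v =
        (1 / (2 * h * zF)) *
            ((∑ i ∈ Finset.Icc 2 m,
                (pad1 D i + pad1 D (i + 1)) * (pad1 v i - pad1 v (i - 1)) ^ 2)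
              + (pad1 D 1 + pad1 D 2) * (pad1 v 1) ^ 2)
          - (Ma / 4) *
            ((∑ i ∈ Finset.Icc 1 (m - 1),
                (pad1 D i - pad1 D (i + 2)) * (pad1 v i) ^ 2)
              + (pad1 D m + pad1 D (m + 1)) * (pad1 v m) ^ 2) := by
  intro v
  cases m with
  | zero => simp [pad1]
  | succ N =>
    rw [sub_mulVec, dotProduct_sub, smul_mulVec, smul_mulVec, dotProduct_smul, dotProduct_smul,
      smul_eq_mul, smul_eq_mul, dotProduct_matS_mulVec, dotProduct_matA_mulVec, sum_range_succ',
      Nat.add_sub_cancel, sum_Icc_eq_sum_range _ 1,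
      show Icc 1 N = Icc (0 + 1) (N + 0) from rfl, sum_Icc_eq_sum_range _ 0]
    simp only [pad1_zero, Nat.add_sub_cancel]
    ring_nf

theorem stmt_12 (m : ℕ) (hm : 1 ≤ m) (h zF Ma : ℝ) (hh : 0 < h) (hzF : 0 < zF)
    (hMa : 0 < Ma) (D : Fin (m + 1) → ℝ) :
    ∀ v : Fin m → ℝ,
      v ⬝ᵥ ((1 / zF) • matS m h (pad1 D) - Ma • matA m (pad1 D)).mulVec v =
        (1 / (2 * h * zF)) *
            ((∑ i ∈ Finset.Icc 2 m,
                (pad1 D i + pad1 D (i + 1)) * (pad1 v i - pad1 v (i - 1)) ^ 2)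
              + (pad1 D 1 + pad1 D 2) * (pad1 v 1) ^ 2)
          - (Ma / 4) *
            ((∑ i ∈ Finset.Icc 1 (m - 1),
                (pad1 D i - pad1 D (i + 2)) * (pad1 v i) ^ 2)
              + (pad1 D m + pad1 D (m + 1)) * (pad1 v m) ^ 2) :=
  stmt_12_general m h zF Ma D
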